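/- Let X be a nonnegative real-valued random variable, let c₀, c₁ ≥ 0, and set ε*(c₂) = ((c₀ + √(c₀² + 4c₁c₂))/(2c₂))^{1/2} for c₂ > 0. There exists a constant γ, depending only on c₀ and c₁, such that: for every c₂ ≥ 1, if P(X ≥ ε) ≤ exp(c₁/ε² − c₂ε² + c₀) for all ε > ε*(c₂), then E[X] ≤ γ c₂^{−1/4}. (The tail-integration step in the proof of Theorem 4, converting the exponential tail bound into the fourth-root convergence rate.) -/
import Mathlib


/-!
STATEMENT 17 (tail-integration step in the proof of Theorem 4): converting the
exponential tail bound into the fourth-root convergence rate.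
-/

open MeasureTheory

noncomputable section

/-- `ε*(c₂)`: the unique positive root of `c₁/ε² - c₂ε² + c₀ = 0`. -/
def epsStar (c₀ c₁ c₂ : ℝ) : ℝ :=
  Real.sqrt ((c₀ + Real.sqrt (c₀ ^ 2 + 4 * c₁ * c₂)) / (2 * c₂))

private lemma sqrt_le_self' {a : ℝ} (ha : 1 ≤ a) : Real.sqrt a ≤ a := by
  have h1 : 1 ≤ Real.sqrt a := by
    have := Real.sqrt_le_sqrt ha
    rwa [Real.sqrt_one] at this
  nlinarith [Real.sq_sqrt (le_trans zero_le_one ha)]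

set_option maxHeartbeats 1000000 in
/-- For `c₀, c₁ ≥ 0` there is a constant `γ` (depending only on
`c₀, c₁`) such that, for every `c₂ ≥ 1` and every nonnegative random variable `X`:
if `P(X ≥ ε) ≤ exp(c₁/ε² - c₂ε² + c₀)` for all `ε > ε*(c₂)`, then
`E[X] ≤ γ c₂^{-1/4}`. -/
theorem statement17 (c₀ c₁ : ℝ) (h₀ : 0 ≤ c₀) (h₁ : 0 ≤ c₁) :
    ∃ γ : ℝ, ∀ {Ω : Type} [inst : MeasurableSpace Ω] (μ : Measure Ω),
      IsProbabilityMeasure μ →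
      ∀ X : Ω → ℝ, Measurable X → (∀ ω, 0 ≤ X ω) →
      ∀ c₂ : ℝ, 1 ≤ c₂ →
      (∀ ε : ℝ, epsStar c₀ c₁ c₂ < ε →
        μ {ω | ε ≤ X ω} ≤ ENNReal.ofReal (Real.exp (c₁ / ε ^ 2 - c₂ * ε ^ 2 + c₀))) →
      ∫ ω, X ω ∂μ ≤ γ * c₂ ^ (-(1/4 : ℝ)) := by
  refine ⟨2 * Real.sqrt (c₀ + Real.sqrt c₁) + Real.sqrt (2 * Real.pi) / 2,
    fun {Ω} inst μ hμ X hXm hX c₂ hc₂ htail => ?_⟩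
  have hc₂0 : (0:ℝ) < c₂ := lt_of_lt_of_le one_pos hc₂
  set E := epsStar c₀ c₁ c₂ with hEdef
  have hE0 : 0 ≤ E := Real.sqrt_nonneg _
  have hargnn : 0 ≤ (c₀ + Real.sqrt (c₀ ^ 2 + 4 * c₁ * c₂)) / (2 * c₂) := by
    apply div_nonneg (by positivity) (by positivity)
  have hEsq : E ^ 2 = (c₀ + Real.sqrt (c₀ ^ 2 + 4 * c₁ * c₂)) / (2 * c₂) := by
    rw [hEdef, epsStar, Real.sq_sqrt hargnn]
  have hs0 : c₀ ≤ Real.sqrt (c₀ ^ 2 + 4 * c₁ * c₂) := by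
    have h' : c₀ = Real.sqrt (c₀ ^ 2) := by rw [Real.sqrt_sq h₀]
    rw [h']
    exact Real.sqrt_le_sqrt (by nlinarith)
  have hval : c₂ * E ^ 2 = (c₀ + Real.sqrt (c₀ ^ 2 + 4 * c₁ * c₂)) / 2 := by
    rw [hEsq]; field_simp
  have hc0E : c₀ ≤ c₂ * E ^ 2 := by rw [hval]; linarith
  have hsq : (Real.sqrt (c₀ ^ 2 + 4 * c₁ * c₂)) ^ 2 = c₀ ^ 2 + 4 * c₁ * c₂ :=
    Real.sq_sqrt (by positivity)
  have hc1E : c₁ ≤ c₂ * E ^ 4 := by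
    have hval2 : (c₂ * E ^ 2) ^ 2
        = ((c₀ + Real.sqrt (c₀ ^ 2 + 4 * c₁ * c₂)) / 2) ^ 2 := by rw [hval]
    nlinarith [mul_nonneg h₀ (le_trans h₀ hs0), hc₂0, sq_nonneg c₀]
  -- exponent bound for t > 2E
  have hexp : ∀ t : ℝ, 2 * E < t → c₁ / t ^ 2 - c₂ * t ^ 2 + c₀ ≤ -(c₂/2) * t ^ 2 := by
    intro t ht
    have ht0 : 0 < t := lt_of_le_of_lt (by positivity) ht
    have t2 : 4 * E ^ 2 ≤ t ^ 2 := by nlinarith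
    have t4 : 16 * E ^ 4 ≤ t ^ 2 * t ^ 2 := by nlinarith
    have h1 : c₁ / t ^ 2 ≤ c₂ * t ^ 2 / 16 := by
      rw [div_le_div_iff₀ (by positivity) (by norm_num)]
      nlinarith [mul_le_mul_of_nonneg_left t4 hc₂0.le]
    have h2 : c₀ ≤ c₂ * t ^ 2 / 4 := by nlinarith [mul_le_mul_of_nonneg_left t2 hc₂0.le]
    nlinarith [mul_pos hc₂0 (pow_pos ht0 2)]
  -- bounds involving √c₂
  have hsc₂pos : 0 < Real.sqrt c₂ := Real.sqrt_pos.mpr hc₂0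
  have h1le : (1:ℝ) ≤ Real.sqrt c₂ := by
    have := Real.sqrt_le_sqrt hc₂; rwa [Real.sqrt_one] at this
  have hsqrtc₂ : Real.sqrt c₂ ≤ c₂ := sqrt_le_self' hc₂
  have hq : Real.sqrt (Real.sqrt c₂) = c₂ ^ ((1:ℝ)/4) := by
    rw [Real.sqrt_eq_rpow, Real.sqrt_eq_rpow, ← Real.rpow_mul hc₂0.le]
    norm_num
  have hrpow : c₂ ^ (-(1/4 : ℝ)) = (Real.sqrt (Real.sqrt c₂))⁻¹ := by
    rw [hq, ← Real.rpow_neg_one, ← Real.rpow_mul hc₂0.le]; norm_num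
  have hEle : E ≤ Real.sqrt (c₀ + Real.sqrt c₁) * c₂ ^ (-(1/4 : ℝ)) := by
    have e3 : (Real.sqrt c₁ * Real.sqrt c₂) ^ 2 = c₁ * c₂ := by
      rw [mul_pow, Real.sq_sqrt h₁, Real.sq_sqrt hc₂0.le]
    have hsb : Real.sqrt (c₀ ^ 2 + 4 * c₁ * c₂)
        ≤ c₀ + 2 * Real.sqrt c₁ * Real.sqrt c₂ := by
      have h := Real.sqrt_le_sqrt (show c₀ ^ 2 + 4 * c₁ * c₂
          ≤ (c₀ + 2 * Real.sqrt c₁ * Real.sqrt c₂) ^ 2 by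
        nlinarith [e3, mul_nonneg h₀ (mul_nonneg (Real.sqrt_nonneg c₁) (Real.sqrt_nonneg c₂))])
      rwa [Real.sqrt_sq (by positivity)] at h
    have hsqsq : Real.sqrt c₂ * Real.sqrt c₂ = c₂ := Real.mul_self_sqrt hc₂0.le
    have harg : (c₀ + Real.sqrt (c₀ ^ 2 + 4 * c₁ * c₂)) / (2 * c₂)
        ≤ (c₀ + Real.sqrt c₁) / Real.sqrt c₂ := by
      rw [div_le_div_iff₀ (by positivity) hsc₂pos]
      have h5 := mul_le_mul_of_nonneg_right hsb hsc₂pos.le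
      have h6 : (c₀ + 2 * Real.sqrt c₁ * Real.sqrt c₂) * Real.sqrt c₂
          = c₀ * Real.sqrt c₂ + 2 * Real.sqrt c₁ * (Real.sqrt c₂ * Real.sqrt c₂) := by ring
      rw [hsqsq] at h6
      have h7 : c₀ * Real.sqrt c₂ ≤ c₀ * c₂ := mul_le_mul_of_nonneg_left hsqrtc₂ h₀
      have g1 : (c₀ + Real.sqrt (c₀ ^ 2 + 4 * c₁ * c₂)) * Real.sqrt c₂
          = c₀ * Real.sqrt c₂ + Real.sqrt (c₀ ^ 2 + 4 * c₁ * c₂) * Real.sqrt c₂ := by ring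
      have g2 : (c₀ + Real.sqrt c₁) * (2 * c₂)
          = 2 * (c₀ * c₂) + 2 * (Real.sqrt c₁ * c₂) := by ring
      rw [g1, g2]
      linarith [h5, h6, h7]
    calc E ≤ Real.sqrt ((c₀ + Real.sqrt c₁) / Real.sqrt c₂) :=
          Real.sqrt_le_sqrt harg
      _ = Real.sqrt (c₀ + Real.sqrt c₁) * c₂ ^ (-(1/4 : ℝ)) := by
          rw [Real.sqrt_div (by positivity), div_eq_mul_inv, ← hrpow]
  -- layer cake
  have hXnn : 0 ≤ᵐ[μ] X := ae_of_all _ hX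
  have layer : ∫⁻ ω, ENNReal.ofReal (X ω) ∂μ = ∫⁻ t in Set.Ioi (0:ℝ), μ {ω | t ≤ X ω} :=
    lintegral_eq_lintegral_meas_le μ hXnn hXm.aemeasurable
  -- Gaussian part
  have hb : (0:ℝ) < c₂ / 2 := by positivity
  have hgauss_int : IntegrableOn (fun t : ℝ => Real.exp (-(c₂/2) * t ^ 2)) (Set.Ioi 0) :=
    (integrable_exp_neg_mul_sq hb).integrableOn
  have hgauss : ∫ t in Set.Ioi (0:ℝ), Real.exp (-(c₂/2) * t ^ 2)
      = Real.sqrt (Real.pi / (c₂/2)) / 2 := integral_gaussian_Ioi _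
  -- bound the tail lintegral
  have key : ∫⁻ t in Set.Ioi (0:ℝ), μ {ω | t ≤ X ω}
      ≤ ENNReal.ofReal (2 * E) + ENNReal.ofReal (Real.sqrt (Real.pi / (c₂/2)) / 2) := by
    have hsplit : Set.Ioi (0:ℝ) = Set.Ioc 0 (2*E) ∪ Set.Ioi (2*E) :=
      (Set.Ioc_union_Ioi_eq_Ioi (by positivity)).symm
    rw [hsplit]
    refine le_trans (lintegral_union_le _ _ _) (add_le_add ?_ ?_)
    · calc ∫⁻ t in Set.Ioc (0:ℝ) (2*E), μ {ω | t ≤ X ω}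
          ≤ ∫⁻ _ in Set.Ioc (0:ℝ) (2*E), 1 :=
            lintegral_mono (fun t => prob_le_one)
        _ = ENNReal.ofReal (2 * E) := by
            rw [setLIntegral_const, one_mul, Real.volume_Ioc, sub_zero]
    · calc ∫⁻ t in Set.Ioi (2*E), μ {ω | t ≤ X ω}
          ≤ ∫⁻ t in Set.Ioi (2*E), ENNReal.ofReal (Real.exp (-(c₂/2) * t ^ 2)) := by
            refine setLIntegral_mono' measurableSet_Ioi (fun t ht => ?_)
            have ht' : 2 * E < t := ht
            have hEt : E < t := lt_of_le_of_lt (by linarith) ht'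
            refine le_trans (htail t hEt) (ENNReal.ofReal_le_ofReal ?_)
            exact Real.exp_le_exp.mpr (hexp t ht')
        _ ≤ ∫⁻ t in Set.Ioi (0:ℝ), ENNReal.ofReal (Real.exp (-(c₂/2) * t ^ 2)) :=
            lintegral_mono_set (Set.Ioi_subset_Ioi (by positivity))
        _ = ENNReal.ofReal (Real.sqrt (Real.pi / (c₂/2)) / 2) := by
            rw [← hgauss, ← ofReal_integral_eq_lintegral_ofReal hgauss_int
              (ae_of_all _ (fun t => (Real.exp_pos _).le))]
  -- final real bound
  have hGbound : 2 * E + Real.sqrt (Real.pi / (c₂/2)) / 2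
      ≤ (2 * Real.sqrt (c₀ + Real.sqrt c₁) + Real.sqrt (2 * Real.pi) / 2)
        * c₂ ^ (-(1/4 : ℝ)) := by
    have hG : Real.sqrt (Real.pi / (c₂/2)) / 2
        ≤ Real.sqrt (2 * Real.pi) / 2 * c₂ ^ (-(1/4 : ℝ)) := by
      have h1 : Real.pi / (c₂/2) = 2 * Real.pi / c₂ := by ring
      have h2 : Real.sqrt (2 * Real.pi / c₂)
          = Real.sqrt (2 * Real.pi) / Real.sqrt c₂ := Real.sqrt_div (by positivity) _
      have h3 : (Real.sqrt c₂)⁻¹ ≤ c₂ ^ (-(1/4 : ℝ)) := by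
        rw [hrpow]
        exact inv_anti₀ (Real.sqrt_pos.mpr hsc₂pos) (sqrt_le_self' h1le)
      have h4 : Real.sqrt (2*Real.pi) / Real.sqrt c₂ / 2
          = Real.sqrt (2*Real.pi) / 2 * (Real.sqrt c₂)⁻¹ := by ring
      rw [h1, h2, h4]
      exact mul_le_mul_of_nonneg_left h3 (by positivity)
    have g : (2 * Real.sqrt (c₀ + Real.sqrt c₁) + Real.sqrt (2 * Real.pi) / 2)
          * c₂ ^ (-(1/4 : ℝ))
        = 2 * (Real.sqrt (c₀ + Real.sqrt c₁) * c₂ ^ (-(1/4 : ℝ)))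
          + Real.sqrt (2 * Real.pi) / 2 * c₂ ^ (-(1/4 : ℝ)) := by ring
    rw [g]
    linarith [hEle, hG]
  -- put together
  have hint : ∫ ω, X ω ∂μ = (∫⁻ ω, ENNReal.ofReal (X ω) ∂μ).toReal :=
    integral_eq_lintegral_of_nonneg_ae hXnn hXm.aestronglyMeasurable
  rw [hint]
  apply ENNReal.toReal_le_of_le_ofReal (by positivity)
  calc ∫⁻ ω, ENNReal.ofReal (X ω) ∂μ
      ≤ ENNReal.ofReal (2 * E) + ENNReal.ofReal (Real.sqrt (Real.pi / (c₂/2)) / 2) := by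
        rw [layer]; exact key
    _ = ENNReal.ofReal (2 * E + Real.sqrt (Real.pi / (c₂/2)) / 2) := by
        rw [ENNReal.ofReal_add (by positivity) (by positivity)]
    _ ≤ ENNReal.ofReal ((2 * Real.sqrt (c₀ + Real.sqrt c₁) + Real.sqrt (2 * Real.pi) / 2)
        * c₂ ^ (-(1/4 : ℝ))) := ENNReal.ofReal_le_ofReal hGbound

end
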